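/- arXiv:2310.04439 — 3 statements merged into one kernel-verified Lean document; each statement's English description precedes it below -/
import Mathlib

section
/- For every positive integer n, F_{2n}² + F_{4n-1}² = F_{2n} · F_{6n-2} + F_{4n-1}; that is, the number with base-b digits F_{2n} and F_{4n-1} is a fixed point of the sum-of-squares-of-digits map in base b = F_{6n-2}. -/
lemma cassini_even (m : ℕ) :
    Nat.fib (2 * m + 2) ^ 2 + 1 = Nat.fib (2 * m + 3) * Nat.fib (2 * m + 1) := by
  induction m with
  | zero => decide
  | succ k ih =>
    have f3 : Nat.fib (2 * k + 3) = Nat.fib (2 * k + 1) + Nat.fib (2 * k + 2) := by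
      rw [show 2 * k + 3 = (2 * k + 1) + 2 from by ring, Nat.fib_add_two]
    have f4 : Nat.fib (2 * k + 4) = Nat.fib (2 * k + 2) + Nat.fib (2 * k + 3) := by
      rw [show 2 * k + 4 = (2 * k + 2) + 2 from by ring, Nat.fib_add_two]
    have f5 : Nat.fib (2 * k + 5) = Nat.fib (2 * k + 3) + Nat.fib (2 * k + 4) := by
      rw [show 2 * k + 5 = (2 * k + 3) + 2 from by ring, Nat.fib_add_two]
    rw [show 2 * (k + 1) + 2 = 2 * k + 4 from by ring,
        show 2 * (k + 1) + 3 = 2 * k + 5 from by ring,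
        show 2 * (k + 1) + 1 = 2 * k + 3 from by ring, f5, f4, f3]
    rw [f3] at ih
    zify at ih ⊢
    linear_combination ih

theorem fib_fixed_point_I (n : ℕ) (hn : 1 ≤ n) :
    Nat.fib (2 * n) ^ 2 + Nat.fib (4 * n - 1) ^ 2 =
      Nat.fib (2 * n) * Nat.fib (6 * n - 2) + Nat.fib (4 * n - 1) := by
  obtain ⟨m, rfl⟩ : ∃ m, n = m + 1 := ⟨n - 1, by omega⟩
  rw [show 2 * (m + 1) = 2 * m + 2 from by ring,
      show 4 * (m + 1) - 1 = 4 * m + 3 from by omega,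
      show 6 * (m + 1) - 2 = 6 * m + 4 from by omega]
  set z := Nat.fib (2 * m) with hzdef
  set x := Nat.fib (2 * m + 1) with hxdef
  have hy : Nat.fib (2 * m + 2) = x + z := by
    rw [show 2 * m + 2 = 2 * m + 2 from rfl, Nat.fib_add_two, hzdef, hxdef]
    ring
  have hA : Nat.fib (4 * m + 3) = x * x + (x + z) * (x + z) := by
    have h := Nat.fib_add (2 * m + 1) (2 * m + 1)
    rw [show 2 * m + 1 + (2 * m + 1) + 1 = 4 * m + 3 from by ring,
        show 2 * m + 1 + 1 = 2 * m + 2 from by ring, hy] at h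
    exact h
  have hB : Nat.fib (4 * m + 2) = x * z + (x + z) * x := by
    have h := Nat.fib_add (2 * m + 1) (2 * m)
    rw [show 2 * m + 1 + 2 * m + 1 = 4 * m + 2 from by ring,
        show 2 * m + 1 + 1 = 2 * m + 2 from by ring,
        show 2 * m + 1 = 2 * m + 1 from rfl, hy] at h
    exact h
  have hC : Nat.fib (6 * m + 4)
      = (x * z + (x + z) * x) * x + (x * x + (x + z) * (x + z)) * (x + z) := by
    have h := Nat.fib_add (4 * m + 2) (2 * m + 1)
    rw [show 4 * m + 2 + (2 * m + 1) + 1 = 6 * m + 4 from by ring,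
        show 4 * m + 2 + 1 = 4 * m + 3 from by ring,
        show 2 * m + 1 + 1 = 2 * m + 2 from by ring, hy, hA, hB] at h
    exact h
  have hcas : Nat.fib (2 * m + 2) ^ 2 + 1 = Nat.fib (2 * m + 3) * x := cassini_even m
  have h3 : Nat.fib (2 * m + 3) = x + (x + z) := by
    rw [show 2 * m + 3 = (2 * m + 1) + 2 from by ring, Nat.fib_add_two, hy]
  rw [hy, h3] at hcas
  rw [hy, hA, hC]
  zify at hcas ⊢
  linear_combination (-(x : ℤ) ^ 2) * hcas
end

section
/- For every positive integer n, F_{2n-1} · F_{4n+1} = F_{3n}² + F_{n+1}², where F denotes the Fibonacci sequence. -/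
open Nat

lemma cassini_sq (m : ℕ) :
    ((Nat.fib (m+1) : ℤ)^2 - Nat.fib m * Nat.fib (m+1) - (Nat.fib m : ℤ)^2)^2 = 1 := by
  induction m with
  | zero => simp
  | succ k ih =>
    have h : ((Nat.fib (k+2) : ℤ)^2 - Nat.fib (k+1) * Nat.fib (k+2) - (Nat.fib (k+1) : ℤ)^2)
        = -(((Nat.fib (k+1) : ℤ)^2 - Nat.fib k * Nat.fib (k+1) - (Nat.fib k : ℤ)^2)) := by
      have h2 : Nat.fib (k+2) = Nat.fib k + Nat.fib (k+1) := Nat.fib_add_two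
      push_cast [h2]; ring
    rw [h, neg_pow, ih]; norm_num

theorem fib_3n_identity_b (n : ℕ) (hn : 1 ≤ n) :
    Nat.fib (2 * n - 1) * Nat.fib (4 * n + 1) =
      Nat.fib (3 * n) ^ 2 + Nat.fib (n + 1) ^ 2 := by
  obtain ⟨m, rfl⟩ : ∃ m, n = m + 1 := ⟨n - 1, by omega⟩
  have i1 : 2 * (m + 1) - 1 = 2*m+1 := by omega
  have i2 : 4 * (m + 1) + 1 = 4*m+5 := by omega
  have i3 : 3 * (m + 1) = 3*m+3 := by omega
  rw [i1, i2, i3]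
  set a : ℤ := (Nat.fib m : ℤ) with ha
  set b : ℤ := (Nat.fib (m+1) : ℤ) with hb
  have e2 : (Nat.fib (m+2) : ℤ) = a + b := by
    rw [show m+2 = m+2 from rfl, Nat.fib_add_two]; push_cast; ring
  have e3 : (Nat.fib (m+3) : ℤ) = a + 2*b := by
    rw [show m+3 = (m+1)+2 from rfl, Nat.fib_add_two]; push_cast [e2]; ring
  have f21 : (Nat.fib (2*m+1) : ℤ) = a^2 + b^2 := by
    have := Nat.fib_add m m
    rw [show 2*m+1 = m+m+1 by ring, this]; push_cast; ring
  have f22 : (Nat.fib (2*m+2) : ℤ) = a*b + b*(a+b) := by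
    have := Nat.fib_add m (m+1)
    rw [show 2*m+2 = m+(m+1)+1 by ring, this]; push_cast [e2]; ring
  have f23 : (Nat.fib (2*m+3) : ℤ) = b^2 + (a+b)^2 := by
    have := Nat.fib_add (m+1) (m+1)
    rw [show 2*m+3 = (m+1)+(m+1)+1 by ring, this]; push_cast [e2]; ring
  have f24 : (Nat.fib (2*m+4) : ℤ) = b*(a+b) + (a+b)*(a+2*b) := by
    have := Nat.fib_add (m+1) (m+2)
    rw [show 2*m+4 = (m+1)+(m+2)+1 by ring, this]; push_cast [e2, e3]; ring
  have f45 : (Nat.fib (4*m+5) : ℤ) =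
      (a^2+b^2)*(b^2+(a+b)^2) + (a*b+b*(a+b))*(b*(a+b)+(a+b)*(a+2*b)) := by
    have := Nat.fib_add (2*m+1) (2*m+3)
    rw [show 4*m+5 = (2*m+1)+(2*m+3)+1 by ring, this,
        show 2*m+1+1 = 2*m+2 by ring, show 2*m+3+1 = 2*m+4 by ring]
    push_cast [f21, f22, f23, f24]; ring
  have f33 : (Nat.fib (3*m+3) : ℤ) = a*(a*b+b*(a+b)) + b*(b^2+(a+b)^2) := by
    have := Nat.fib_add m (2*m+2)
    rw [show 3*m+3 = m+(2*m+2)+1 by ring, this, show 2*m+2+1 = 2*m+3 by ring]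
    push_cast [f22, f23]; ring
  have hc := cassini_sq m
  rw [← ha, ← hb] at hc
  zify
  rw [f21, f45, f33, e2]
  linear_combination (a+b)^2 * hc
end

section
/- Let p_n(x) be the Pell polynomials. For every positive integer n, the polynomial identity (p_{2n}(x)·p_{2n-1}(x))² + (p_{2n+1}(x)·p_{2n-1}(x))² = p_{2n}(x)·p_{2n-1}(x)·p_{4n}(x) + p_{2n+1}(x)·p_{2n-1}(x) holds. -/
open Polynomial in
noncomputable def pell : ℕ → Polynomial ℤ
  | 0 => 0
  | 1 => 1
  | n + 2 => 2 * X * pell (n + 1) + pell n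

open Polynomial

lemma pell_rec (n : ℕ) : pell (n + 2) = 2 * X * pell (n + 1) + pell n := rfl

lemma pell_add (m n : ℕ) :
    pell (m + n + 1) = pell (m + 1) * pell (n + 1) + pell m * pell n := by
  induction m using Nat.twoStepInduction generalizing n with
  | zero => simp [pell]
  | one =>
    have h2 : pell 2 = 2 * X := by rw [pell_rec]; simp [pell]
    rw [show 1 + n + 1 = n + 2 from by omega, pell_rec, h2]
    simp [pell]
  | more m ih1 ih2 =>
    have h1 : m + 2 + n + 1 = (m + n + 1) + 2 := by omega
    have h2 : m + 1 + n + 1 = (m + n + 1) + 1 := by omega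
    rw [h1, pell_rec, ← h2, ih2 n, ih1 n,
      show m + 2 + 1 = m + 1 + 2 from by omega, pell_rec (m + 1), pell_rec m]
    ring

lemma pell_catalan (m b : ℕ) :
    pell (m + b) * pell (b + 1) - pell (m + b + 1) * pell b = (-1) ^ b * pell m := by
  induction b with
  | zero => simp [pell]
  | succ b ih =>
    have h1 : m + (b + 1) = (m + b) + 1 := by omega
    have h2 : m + (b + 1) + 1 = (m + b) + 2 := by omega
    rw [h1, show m + b + 1 + 1 = m + b + 2 from by omega,
      show b + 1 + 1 = b + 2 from by omega, pell_rec (m + b), pell_rec b]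
    rw [pow_succ]
    linear_combination -ih

theorem pell_fixed_point_c (n : ℕ) (hn : 1 ≤ n) :
    (pell (2 * n) * pell (2 * n - 1)) ^ 2 + (pell (2 * n + 1) * pell (2 * n - 1)) ^ 2 =
      pell (2 * n) * pell (2 * n - 1) * pell (4 * n) +
        pell (2 * n + 1) * pell (2 * n - 1) := by
  obtain ⟨k, rfl⟩ : ∃ k, n = k + 1 := ⟨n - 1, by omega⟩
  simp only [show 2 * (k + 1) = 2 * k + 2 from by ring,
    show 2 * k + 2 - 1 = 2 * k + 1 from by omega,
    show 2 * k + 2 + 1 = 2 * k + 3 from by ring,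
    show 4 * (k + 1) = 4 * k + 4 from by ring]
  have hB := pell_add (2 * k + 2) (2 * k + 2)
  simp only [show 2 * k + 2 + (2 * k + 2) + 1 = 4 * k + 5 from by omega,
    show 2 * k + 2 + 1 = 2 * k + 3 from by omega] at hB
  have hC := pell_catalan (2 * k + 3) (2 * k + 1)
  simp only [show 2 * k + 3 + (2 * k + 1) = 4 * k + 4 from by omega,
    show 4 * k + 4 + 1 = 4 * k + 5 from by omega,
    show 2 * k + 1 + 1 = 2 * k + 2 from by omega] at hC
  have hodd : ((-1 : Polynomial ℤ)) ^ (2 * k + 1) = -1 := Odd.neg_one_pow ⟨k, by ring⟩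
  rw [hodd] at hC
  linear_combination (-(pell (2 * k + 1)) ^ 2) * hB + (-(pell (2 * k + 1))) * hC
end
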